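/- With the merged weighted flag data and the quotient maps as in the context, the following identity holds: Σ_{j=1}^{s} ((γ_{j+1} − γ_j)/r) · (r · dim k(M_j) − t · dim M_j) = Σ_{v∈V} σ_v · [ Σ_{j=1}^{s_v} ((γ^v_{j+1} − γ^v_j)/r_v) · (r_v · dim k_v(Ŵ^v_j) − t_v · dim Ŵ^v_j) ] − Σ_{v∈V} σ_v · (t_v/r_v − t/r) · [ Σ_{j=1}^{s_v+1} γ^v_j · (dim Ŵ^v_j − dim Ŵ^v_{j−1}) ] (this is the paper's weight formula, Proposition 1.5). -/
import Mathlib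


open Module

private lemma tele1 {M : Type*} [AddCommGroup M] (f : ℕ → M) (m : ℕ) :
    ∑ ι ∈ Finset.Icc 1 m, (f ι - f (ι - 1)) = f m - f 0 := by
  induction m with
  | zero => simp
  | succ n ih =>
      rw [Finset.sum_Icc_succ_top (by omega), ih]
      simp only [Nat.add_sub_cancel]
      abel

private lemma tele2 (g : ℕ → ℤ) (a b : ℕ) (h : a ≤ b + 1) :
    ∑ j ∈ Finset.Icc a b, (g (j + 1) - g j) = g (b + 1) - g a := by
  induction b with
  | zero => interval_cases a <;> simp
  | succ n ih =>
      rcases Nat.lt_or_ge a (n + 2) with h' | h'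
      · rw [Finset.sum_Icc_succ_top (by omega), ih (by omega)]; abel
      · have : a = n + 2 := by omega
        subst this; simp

private lemma abel1 (n : ℕ) (f δ : ℕ → ℚ) (c : ℚ) (hf0 : f 0 = 0) :
    ∑ ι ∈ Finset.Icc 1 (n + 1), (f ι - f (ι - 1)) * (c - δ ι)
      = ∑ ι ∈ Finset.Icc 1 n, (δ (ι + 1) - δ ι) * f ι + (c - δ (n + 1)) * f (n + 1) := by
  induction n with
  | zero => simp [hf0]; ring
  | succ n ih =>
      rw [Finset.sum_Icc_succ_top (a := 1) (by omega), ih,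
        Finset.sum_Icc_succ_top (a := 1) (by omega)]
      simp only [Nat.add_sub_cancel]
      ring

private lemma abel2 (n : ℕ) (g δ : ℕ → ℚ) (hg0 : g 0 = 0) :
    ∑ ι ∈ Finset.Icc 1 (n + 1), δ ι * (g ι - g (ι - 1))
      = δ (n + 1) * g (n + 1) - ∑ ι ∈ Finset.Icc 1 n, (δ (ι + 1) - δ ι) * g ι := by
  induction n with
  | zero => simp [hg0]
  | succ n ih =>
      rw [Finset.sum_Icc_succ_top (a := 1) (by omega), ih,
        Finset.sum_Icc_succ_top (a := 1) (by omega)]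
      simp only [Nat.add_sub_cancel]
      ring

private lemma monoOn (s : ℕ) (γ : ℕ → ℤ) (hγ : ∀ j, 1 ≤ j → j ≤ s → γ j < γ (j + 1)) :
    ∀ a b, 1 ≤ a → a ≤ b → b ≤ s + 1 → γ a ≤ γ b := by
  intro a b ha hab hb
  induction b with
  | zero => omega
  | succ n ih =>
      rcases Nat.lt_or_ge a (n + 1) with h | h
      · exact le_trans (ih (by omega) (by omega)) (le_of_lt (hγ n (by omega) (by omega)))
      · have : a = n + 1 := by omega
        subst this; rfl

private lemma strictOn (s : ℕ) (γ : ℕ → ℤ) (hγ : ∀ j, 1 ≤ j → j ≤ s → γ j < γ (j + 1)) :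
    ∀ a b, 1 ≤ a → a < b → b ≤ s + 1 → γ a < γ b := fun a b ha hab hb =>
  lt_of_lt_of_le (hγ a ha (by omega)) (monoOn s γ hγ (a + 1) b (by omega) (by omega) hb)

/-- The key step-function ("integration") lemma. -/
private lemma keyStep (s : ℕ) (γ : ℕ → ℤ) (hγ : ∀ j, 1 ≤ j → j ≤ s → γ j < γ (j + 1))
    (n : ℕ) (δ : ℕ → ℤ) (hδ : ∀ j, 1 ≤ j → j ≤ n → δ j < δ (j + 1))
    (hsub : ∀ ι, 1 ≤ ι → ι ≤ n + 1 → ∃ j, 1 ≤ j ∧ j ≤ s + 1 ∧ γ j = δ ι)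
    (f : ℕ → ℚ) (hf0 : f 0 = 0) :
    ∑ j ∈ Finset.Icc 1 s, ((γ (j + 1) : ℚ) - (γ j : ℚ))
        * f (((Finset.Icc 1 (n + 1)).filter fun ι => δ ι ≤ γ j).sup id)
      = ∑ ι ∈ Finset.Icc 1 n, ((δ (ι + 1) : ℚ) - (δ ι : ℚ)) * f ι
        + ((γ (s + 1) : ℚ) - (δ (n + 1) : ℚ)) * f (n + 1) := by
  have claim1 : ∀ j, f (((Finset.Icc 1 (n + 1)).filter fun ι => δ ι ≤ γ j).sup id)
      = ∑ ι ∈ (Finset.Icc 1 (n + 1)).filter (fun ι => δ ι ≤ γ j), (f ι - f (ι - 1)) := by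
    intro j
    set T := (Finset.Icc 1 (n + 1)).filter (fun ι => δ ι ≤ γ j) with hT
    rcases T.eq_empty_or_nonempty with h | h
    · rw [h]; simpa using hf0
    · obtain ⟨m, hmT, hmax⟩ := Finset.exists_mem_eq_sup T h id
      have hm1 : 1 ≤ m ∧ m ≤ n + 1 ∧ δ m ≤ γ j := by
        have := hmT; rw [hT, Finset.mem_filter, Finset.mem_Icc] at this; tauto
      have hTeq : T = Finset.Icc 1 m := by
        ext ι
        rw [hT, Finset.mem_filter, Finset.mem_Icc, Finset.mem_Icc]
        constructor
        · rintro ⟨⟨h1, h2⟩, h3⟩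
          refine ⟨h1, ?_⟩
          have : id ι ≤ T.sup id := Finset.le_sup
            (by rw [hT]; exact Finset.mem_filter.2 ⟨Finset.mem_Icc.2 ⟨h1, h2⟩, h3⟩)
          rw [hmax] at this
          exact this
        · rintro ⟨h1, h2⟩
          exact ⟨⟨h1, by omega⟩, le_trans (monoOn n δ hδ ι m h1 h2 hm1.2.1) hm1.2.2⟩
      rw [hmax, hTeq, tele1, hf0, sub_zero]
      rfl
  have claim2 : ∀ ι, 1 ≤ ι → ι ≤ n + 1 →
      ∑ j ∈ Finset.Icc 1 s, (if δ ι ≤ γ j then γ (j + 1) - γ j else 0) = γ (s + 1) - δ ι := by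
    intro ι h1 h2
    obtain ⟨jι, hj1, hj2, hj3⟩ := hsub ι h1 h2
    have hfe : (Finset.Icc 1 s).filter (fun j => δ ι ≤ γ j) = Finset.Icc jι s := by
      ext j
      rw [Finset.mem_filter, Finset.mem_Icc, Finset.mem_Icc]
      constructor
      · rintro ⟨⟨ha, hb⟩, hc⟩
        refine ⟨?_, hb⟩
        by_contra hcon
        have : γ j < γ jι := strictOn s γ hγ j jι ha (by omega) hj2
        omega
      · rintro ⟨ha, hb⟩
        exact ⟨⟨by omega, hb⟩, by rw [← hj3]; exact monoOn s γ hγ jι j hj1 ha (by omega)⟩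
    rw [← Finset.sum_filter, hfe, tele2 γ jι s (by omega), hj3]
  calc ∑ j ∈ Finset.Icc 1 s, ((γ (j + 1) : ℚ) - (γ j : ℚ))
        * f (((Finset.Icc 1 (n + 1)).filter fun ι => δ ι ≤ γ j).sup id)
      = ∑ j ∈ Finset.Icc 1 s, ∑ ι ∈ Finset.Icc 1 (n + 1),
          (if δ ι ≤ γ j then ((γ (j + 1) : ℚ) - (γ j : ℚ)) * (f ι - f (ι - 1)) else 0) := by
        refine Finset.sum_congr rfl fun j _ => ?_
        rw [claim1 j, Finset.mul_sum, ← Finset.sum_filter]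
    _ = ∑ ι ∈ Finset.Icc 1 (n + 1), ∑ j ∈ Finset.Icc 1 s,
          (if δ ι ≤ γ j then ((γ (j + 1) : ℚ) - (γ j : ℚ)) * (f ι - f (ι - 1)) else 0) :=
        Finset.sum_comm
    _ = ∑ ι ∈ Finset.Icc 1 (n + 1), (f ι - f (ι - 1)) * ((γ (s + 1) : ℚ) - (δ ι : ℚ)) := by
        refine Finset.sum_congr rfl fun ι hι => ?_
        rw [Finset.mem_Icc] at hι
        have h2 := congrArg (fun z : ℤ => (z : ℚ)) (claim2 ι hι.1 hι.2)
        push_cast at h2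
        rw [← h2, Finset.mul_sum]
        refine Finset.sum_congr rfl fun j _ => ?_
        split <;> ring
    _ = _ := abel1 n f (fun ι => (δ ι : ℚ)) ((γ (s + 1) : ℚ)) hf0

/-- `Submodule.pi Set.univ p` is linearly equivalent to `Π i, p i`. -/
private def piSubEquiv {ι : Type*} {M : ι → Type*} [∀ i, AddCommGroup (M i)]
    [∀ i, Module ℂ (M i)] (p : ∀ i, Submodule ℂ (M i)) :
    (Submodule.pi Set.univ p) ≃ₗ[ℂ] ∀ i, p i where
  toFun x i := ⟨x.1 i, x.2 i (Set.mem_univ i)⟩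
  map_add' x y := rfl
  map_smul' c x := rfl
  invFun y := ⟨fun i => y i, fun i _ => (y i).2⟩
  left_inv x := rfl
  right_inv y := rfl

private lemma finrank_piSub {ι : Type*} [Fintype ι] {M : ι → Type*} [∀ i, AddCommGroup (M i)]
    [∀ i, Module ℂ (M i)] [∀ i, FiniteDimensional ℂ (M i)] (p : ∀ i, Submodule ℂ (M i)) :
    finrank ℂ (Submodule.pi Set.univ p) = ∑ i, finrank ℂ (p i) := by
  rw [(piSubEquiv p).finrank_eq, Module.finrank_pi_fintype]

private lemma map_pi_pi {V : Type} [Fintype V] (σ : V → ℕ) {W : V → Type}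
    [∀ v, AddCommGroup (W v)] [∀ v, Module ℂ (W v)] (tv : V → ℕ)
    (kv : ∀ v, W v →ₗ[ℂ] (Fin (tv v) → ℂ)) (p : ∀ v, Submodule ℂ (W v)) :
    Submodule.map (LinearMap.pi fun v => LinearMap.pi fun i =>
        (kv v) ∘ₗ (LinearMap.proj i ∘ₗ LinearMap.proj v))
      (Submodule.pi Set.univ fun v => Submodule.pi Set.univ fun _ : Fin (σ v) => p v)
      = Submodule.pi Set.univ fun v => Submodule.pi Set.univ fun _ : Fin (σ v) =>
          Submodule.map (kv v) (p v) := by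
  ext y
  simp only [Submodule.mem_map, Submodule.mem_pi, Set.mem_univ, forall_const,
    LinearMap.pi_apply, LinearMap.comp_apply, LinearMap.proj_apply]
  constructor
  · rintro ⟨x, hx, rfl⟩ v i
    exact ⟨x v i, hx v i, rfl⟩
  · intro hy
    choose x hx1 hx2 using hy
    exact ⟨fun v i => x v i, hx1, funext fun v => funext fun i => hx2 v i⟩


/-- The weight formula (Proposition 1.5): with merged weighted flag data
`(Ŵ^v_•, γ^v)`, merged weights `γ_1 < ⋯ < γ_{s+1}`, merged subspaces
`M_j = ⊕_v (W^v_j)^{⊕σ_v} ⊆ M = ⊕_v W_v^{⊕σ_v}` and quotients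
`k_v : W_v → ℂ^{t_v}`, `k = ⊕_v k_v^{⊕σ_v} : M → ℂ^t`, one has
`Σ_{j=1}^{s} ((γ_{j+1} − γ_j)/r)·(r·dim k(M_j) − t·dim M_j)
  = Σ_v σ_v·[Σ_{j=1}^{s_v} ((γ^v_{j+1} − γ^v_j)/r_v)·(r_v·dim k_v(Ŵ^v_j) − t_v·dim Ŵ^v_j)]
    − Σ_v σ_v·(t_v/r_v − t/r)·[Σ_{j=1}^{s_v+1} γ^v_j·(dim Ŵ^v_j − dim Ŵ^v_{j−1})]`,
where `r = Σ_v σ_v·r_v` and `t = Σ_v σ_v·t_v`. -/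
theorem weight_formula (V : Type) [Fintype V]
    (W : V → Type) [∀ v, AddCommGroup (W v)] [∀ v, Module ℂ (W v)]
    [∀ v, FiniteDimensional ℂ (W v)]
    (r : V → ℕ) (hr : ∀ v, r v = finrank ℂ (W v)) (hrpos : ∀ v, 0 < r v)
    (σ : V → ℕ) (hσ : ∀ v, 0 < σ v)
    -- the weighted flags in the spaces `W_v`
    (sv : V → ℕ) (Wh : (v : V) → ℕ → Submodule ℂ (W v))
    (hWh0 : ∀ v, Wh v 0 = ⊥) (hWhtop : ∀ v, Wh v (sv v + 1) = ⊤)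
    (hWhmono : ∀ v, ∀ j ≤ sv v, Wh v j < Wh v (j + 1))
    (γv : (v : V) → ℕ → ℤ)
    (hγv : ∀ v, ∀ j, 1 ≤ j → j ≤ sv v → γv v j < γv v (j + 1))
    -- the merged weight vector `γ_1 < ⋯ < γ_{s+1}`, consisting of the distinct
    -- values occurring among the `γ^v_j`
    (s : ℕ) (γ : ℕ → ℤ)
    (hγ : ∀ j, 1 ≤ j → j ≤ s → γ j < γ (j + 1))
    (hmerge : {x : ℤ | ∃ j, 1 ≤ j ∧ j ≤ s + 1 ∧ γ j = x}
      = {x : ℤ | ∃ v j, 1 ≤ j ∧ j ≤ sv v + 1 ∧ γv v j = x})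
    -- the merged flag `W^v_j := Ŵ^v_{ι_v(j)}`, `ι_v(j) = max{ι ∈ [1, s_v+1] : γ^v_ι ≤ γ_j}`
    -- (`= 0`, i.e. the zero subspace, if no such `ι` exists)
    (Wm : (v : V) → ℕ → Submodule ℂ (W v))
    (hWm0 : ∀ v, Wm v 0 = ⊥)
    (hWm : ∀ v, ∀ j, 1 ≤ j → j ≤ s + 1 →
      Wm v j = Wh v (((Finset.Icc 1 (sv v + 1)).filter fun ι => γv v ι ≤ γ j).sup id))
    -- the subspaces `M_j := ⊕_v (W^v_j)^{⊕σ_v}` of `M := ⊕_v W_v^{⊕σ_v}`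
    (Msub : ℕ → Submodule ℂ ((v : V) → Fin (σ v) → W v))
    (hMsub : ∀ j, Msub j
      = Submodule.pi Set.univ fun v => Submodule.pi Set.univ fun _ : Fin (σ v) => Wm v j)
    -- the surjective quotient maps `k_v : W_v → ℂ^{t_v}` and `k := ⊕_v k_v^{⊕σ_v}`
    (tv : V → ℕ) (kv : (v : V) → W v →ₗ[ℂ] (Fin (tv v) → ℂ))
    (hkv : ∀ v, Function.Surjective (kv v))
    (kmap : ((v : V) → Fin (σ v) → W v) →ₗ[ℂ] ((v : V) → Fin (σ v) → Fin (tv v) → ℂ))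
    (hkmap : kmap = LinearMap.pi fun v => LinearMap.pi fun i =>
      (kv v) ∘ₗ (LinearMap.proj i ∘ₗ LinearMap.proj v)) :
    ∑ j ∈ Finset.Icc 1 s,
        ((γ (j + 1) - γ j : ℤ) : ℚ) / (∑ v, σ v * r v : ℕ) *
          ((∑ v, σ v * r v : ℕ) * (finrank ℂ (Submodule.map kmap (Msub j)) : ℚ)
            - (∑ v, σ v * tv v : ℕ) * (finrank ℂ (Msub j) : ℚ))
      = (∑ v, (σ v : ℚ) *
            ∑ j ∈ Finset.Icc 1 (sv v),
              ((γv v (j + 1) - γv v j : ℤ) : ℚ) / (r v) *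
                ((r v : ℚ) * (finrank ℂ (Submodule.map (kv v) (Wh v j)) : ℚ)
                  - (tv v : ℚ) * (finrank ℂ (Wh v j) : ℚ)))
        - ∑ v, (σ v : ℚ) * ((tv v : ℚ) / (r v : ℚ)
              - (∑ w, σ w * tv w : ℕ) / (∑ w, σ w * r w : ℕ)) *
            ∑ j ∈ Finset.Icc 1 (sv v + 1),
              (γv v j : ℚ) * ((finrank ℂ (Wh v j) : ℚ) - (finrank ℂ (Wh v (j - 1)) : ℚ)) := by
  rcases isEmpty_or_nonempty V with hV | hV
  · simp [Finset.univ_eq_empty]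
  -- notation
  have hRq : ((∑ v, σ v * r v : ℕ) : ℚ) ≠ 0 := by
    have : 0 < ∑ v, σ v * r v :=
      Finset.sum_pos (fun v _ => Nat.mul_pos (hσ v) (hrpos v)) Finset.univ_nonempty
    exact_mod_cast this.ne'
  have hrq : ∀ v, ((r v : ℚ)) ≠ 0 := fun v => by exact_mod_cast (hrpos v).ne'
  -- dimension facts
  have hdhtop : ∀ v, (finrank ℂ (Wh v (sv v + 1)) : ℚ) = (r v : ℚ) := by
    intro v; rw [hWhtop v, finrank_top, hr v]
  have hDhtop : ∀ v, (finrank ℂ (Submodule.map (kv v) (Wh v (sv v + 1))) : ℚ) = (tv v : ℚ) := by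
    intro v
    have : Submodule.map (kv v) (Wh v (sv v + 1)) = ⊤ := by
      rw [hWhtop v, Submodule.map_top, LinearMap.range_eq_top]; exact hkv v
    rw [this, finrank_top, Module.finrank_fin_fun]
  have hsubv : ∀ v, ∀ ι, 1 ≤ ι → ι ≤ sv v + 1 → ∃ j, 1 ≤ j ∧ j ≤ s + 1 ∧ γ j = γv v ι := by
    intro v ι h1 h2
    have : γv v ι ∈ {x : ℤ | ∃ j, 1 ≤ j ∧ j ≤ s + 1 ∧ γ j = x} := by
      rw [hmerge]; exact ⟨v, ι, h1, h2, rfl⟩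
    exact this
  -- the merged sums, per vertex, via the key step lemma
  have hSD : ∀ v,
      ∑ j ∈ Finset.Icc 1 s, ((γ (j + 1) : ℚ) - (γ j : ℚ))
          * (finrank ℂ (Submodule.map (kv v) (Wm v j)) : ℚ)
        = (∑ ι ∈ Finset.Icc 1 (sv v), ((γv v (ι + 1) : ℚ) - (γv v ι : ℚ))
              * (finrank ℂ (Submodule.map (kv v) (Wh v ι)) : ℚ))
          + ((γ (s + 1) : ℚ) - (γv v (sv v + 1) : ℚ)) * (tv v : ℚ) := by
    intro v
    have h0 : ((finrank ℂ (Submodule.map (kv v) (Wh v 0)) : ℚ)) = 0 := by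
      rw [hWh0 v, Submodule.map_bot]; simp
    calc ∑ j ∈ Finset.Icc 1 s, ((γ (j + 1) : ℚ) - (γ j : ℚ))
          * (finrank ℂ (Submodule.map (kv v) (Wm v j)) : ℚ)
        = ∑ j ∈ Finset.Icc 1 s, ((γ (j + 1) : ℚ) - (γ j : ℚ))
          * (finrank ℂ (Submodule.map (kv v)
              (Wh v (((Finset.Icc 1 (sv v + 1)).filter fun ι => γv v ι ≤ γ j).sup id))) : ℚ) := by
          refine Finset.sum_congr rfl fun j hj => ?_
          rw [Finset.mem_Icc] at hj
          rw [hWm v j hj.1 (by omega)]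
      _ = (∑ ι ∈ Finset.Icc 1 (sv v), ((γv v (ι + 1) : ℚ) - (γv v ι : ℚ))
              * (finrank ℂ (Submodule.map (kv v) (Wh v ι)) : ℚ))
          + ((γ (s + 1) : ℚ) - (γv v (sv v + 1) : ℚ))
            * (finrank ℂ (Submodule.map (kv v) (Wh v (sv v + 1))) : ℚ) :=
          keyStep s γ hγ (sv v) (γv v) (hγv v) (hsubv v)
            (fun ι => (finrank ℂ (Submodule.map (kv v) (Wh v ι)) : ℚ)) h0
      _ = _ := by rw [hDhtop v]
  have hSd : ∀ v,
      ∑ j ∈ Finset.Icc 1 s, ((γ (j + 1) : ℚ) - (γ j : ℚ)) * (finrank ℂ (Wm v j) : ℚ)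
        = (∑ ι ∈ Finset.Icc 1 (sv v), ((γv v (ι + 1) : ℚ) - (γv v ι : ℚ))
              * (finrank ℂ (Wh v ι) : ℚ))
          + ((γ (s + 1) : ℚ) - (γv v (sv v + 1) : ℚ)) * (r v : ℚ) := by
    intro v
    have h0 : ((finrank ℂ (Wh v 0) : ℚ)) = 0 := by rw [hWh0 v]; simp
    calc ∑ j ∈ Finset.Icc 1 s, ((γ (j + 1) : ℚ) - (γ j : ℚ)) * (finrank ℂ (Wm v j) : ℚ)
        = ∑ j ∈ Finset.Icc 1 s, ((γ (j + 1) : ℚ) - (γ j : ℚ))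
          * (finrank ℂ (Wh v (((Finset.Icc 1 (sv v + 1)).filter
              fun ι => γv v ι ≤ γ j).sup id)) : ℚ) := by
          refine Finset.sum_congr rfl fun j hj => ?_
          rw [Finset.mem_Icc] at hj
          rw [hWm v j hj.1 (by omega)]
      _ = (∑ ι ∈ Finset.Icc 1 (sv v), ((γv v (ι + 1) : ℚ) - (γv v ι : ℚ))
              * (finrank ℂ (Wh v ι) : ℚ))
          + ((γ (s + 1) : ℚ) - (γv v (sv v + 1) : ℚ))
            * (finrank ℂ (Wh v (sv v + 1)) : ℚ) :=
          keyStep s γ hγ (sv v) (γv v) (hγv v) (hsubv v)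
            (fun ι => (finrank ℂ (Wh v ι) : ℚ)) h0
      _ = _ := by rw [hdhtop v]
  -- dimensions of the merged subspaces
  have hdim : ∀ j, (finrank ℂ (Msub j) : ℚ) = ∑ v, (σ v : ℚ) * (finrank ℂ (Wm v j) : ℚ) := by
    intro j
    have : finrank ℂ (Msub j) = ∑ v, σ v * finrank ℂ (Wm v j) := by
      rw [hMsub j, finrank_piSub]
      exact Finset.sum_congr rfl fun v _ => by
        rw [finrank_piSub, Finset.sum_const, Finset.card_univ, Fintype.card_fin, smul_eq_mul]
    rw [this]; push_cast; rfl
  have hdimk : ∀ j, (finrank ℂ (Submodule.map kmap (Msub j)) : ℚ)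
      = ∑ v, (σ v : ℚ) * (finrank ℂ (Submodule.map (kv v) (Wm v j)) : ℚ) := by
    intro j
    have : finrank ℂ (Submodule.map kmap (Msub j))
        = ∑ v, σ v * finrank ℂ (Submodule.map (kv v) (Wm v j)) := by
      rw [hkmap, hMsub j, map_pi_pi σ tv kv (fun v => Wm v j), finrank_piSub]
      exact Finset.sum_congr rfl fun v _ => by
        rw [finrank_piSub, Finset.sum_const, Finset.card_univ, Fintype.card_fin, smul_eq_mul]
    rw [this]; push_cast; rfl
  -- rewrite the LHS of the goal
  have hL : ∑ j ∈ Finset.Icc 1 s,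
        ((γ (j + 1) - γ j : ℤ) : ℚ) / (∑ v, σ v * r v : ℕ) *
          ((∑ v, σ v * r v : ℕ) * (finrank ℂ (Submodule.map kmap (Msub j)) : ℚ)
            - (∑ v, σ v * tv v : ℕ) * (finrank ℂ (Msub j) : ℚ))
      = ∑ v, ((σ v : ℚ) * (∑ j ∈ Finset.Icc 1 s, ((γ (j + 1) : ℚ) - (γ j : ℚ))
              * (finrank ℂ (Submodule.map (kv v) (Wm v j)) : ℚ))
          - ((∑ v, σ v * tv v : ℕ) : ℚ) / ((∑ v, σ v * r v : ℕ) : ℚ)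
            * ((σ v : ℚ) * (∑ j ∈ Finset.Icc 1 s, ((γ (j + 1) : ℚ) - (γ j : ℚ))
              * (finrank ℂ (Wm v j) : ℚ)))) := by
    calc ∑ j ∈ Finset.Icc 1 s,
          ((γ (j + 1) - γ j : ℤ) : ℚ) / (∑ v, σ v * r v : ℕ) *
            ((∑ v, σ v * r v : ℕ) * (finrank ℂ (Submodule.map kmap (Msub j)) : ℚ)
              - (∑ v, σ v * tv v : ℕ) * (finrank ℂ (Msub j) : ℚ))
        = ∑ j ∈ Finset.Icc 1 s, ∑ v,
            ((σ v : ℚ) * (((γ (j + 1) : ℚ) - (γ j : ℚ))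
                * (finrank ℂ (Submodule.map (kv v) (Wm v j)) : ℚ))
              - ((∑ v, σ v * tv v : ℕ) : ℚ) / ((∑ v, σ v * r v : ℕ) : ℚ)
                * ((σ v : ℚ) * (((γ (j + 1) : ℚ) - (γ j : ℚ))
                  * (finrank ℂ (Wm v j) : ℚ)))) := by
          refine Finset.sum_congr rfl fun j _ => ?_
          rw [hdimk j, hdim j]
          have e1 : ∀ X Y : ℚ,
              ((γ (j + 1) - γ j : ℤ) : ℚ) / ((∑ v, σ v * r v : ℕ) : ℚ)
                * (((∑ v, σ v * r v : ℕ) : ℚ) * X - ((∑ v, σ v * tv v : ℕ) : ℚ) * Y)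
              = ((γ (j + 1) : ℚ) - (γ j : ℚ)) * X
                - ((∑ v, σ v * tv v : ℕ) : ℚ) / ((∑ v, σ v * r v : ℕ) : ℚ)
                  * (((γ (j + 1) : ℚ) - (γ j : ℚ)) * Y) := by
            intro X Y
            have hRq' := hRq
            push_cast at hRq' ⊢
            field_simp [hRq']
          rw [e1, Finset.mul_sum, Finset.mul_sum, Finset.mul_sum, ← Finset.sum_sub_distrib]
          exact Finset.sum_congr rfl fun v _ => by ring
      _ = ∑ v, ∑ j ∈ Finset.Icc 1 s,
            ((σ v : ℚ) * (((γ (j + 1) : ℚ) - (γ j : ℚ))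
                * (finrank ℂ (Submodule.map (kv v) (Wm v j)) : ℚ))
              - ((∑ v, σ v * tv v : ℕ) : ℚ) / ((∑ v, σ v * r v : ℕ) : ℚ)
                * ((σ v : ℚ) * (((γ (j + 1) : ℚ) - (γ j : ℚ))
                  * (finrank ℂ (Wm v j) : ℚ)))) := Finset.sum_comm
      _ = _ := by
          refine Finset.sum_congr rfl fun v _ => ?_
          rw [Finset.sum_sub_distrib, ← Finset.mul_sum, ← Finset.mul_sum, ← Finset.mul_sum]
  -- rewrite the two sums on the RHS of the goal
  have hR1 : ∀ v, (σ v : ℚ) *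
        ∑ j ∈ Finset.Icc 1 (sv v),
          ((γv v (j + 1) - γv v j : ℤ) : ℚ) / (r v) *
            ((r v : ℚ) * (finrank ℂ (Submodule.map (kv v) (Wh v j)) : ℚ)
              - (tv v : ℚ) * (finrank ℂ (Wh v j) : ℚ))
      = (σ v : ℚ) * ((∑ ι ∈ Finset.Icc 1 (sv v), ((γv v (ι + 1) : ℚ) - (γv v ι : ℚ))
              * (finrank ℂ (Submodule.map (kv v) (Wh v ι)) : ℚ))
          - (tv v : ℚ) / (r v : ℚ) * ∑ ι ∈ Finset.Icc 1 (sv v),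
              ((γv v (ι + 1) : ℚ) - (γv v ι : ℚ)) * (finrank ℂ (Wh v ι) : ℚ)) := by
    intro v
    congr 1
    rw [Finset.mul_sum, ← Finset.sum_sub_distrib]
    refine Finset.sum_congr rfl fun ι _ => ?_
    have hrv := hrq v
    push_cast at hrv ⊢
    field_simp [hrv]
  have hR2 : ∀ v, (σ v : ℚ) * ((tv v : ℚ) / (r v : ℚ)
        - ((∑ w, σ w * tv w : ℕ) : ℚ) / ((∑ w, σ w * r w : ℕ) : ℚ)) *
        ∑ j ∈ Finset.Icc 1 (sv v + 1),
          (γv v j : ℚ) * ((finrank ℂ (Wh v j) : ℚ) - (finrank ℂ (Wh v (j - 1)) : ℚ))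
      = (σ v : ℚ) * ((tv v : ℚ) / (r v : ℚ)
          - ((∑ w, σ w * tv w : ℕ) : ℚ) / ((∑ w, σ w * r w : ℕ) : ℚ)) *
        ((γv v (sv v + 1) : ℚ) * (r v : ℚ)
          - ∑ ι ∈ Finset.Icc 1 (sv v),
              ((γv v (ι + 1) : ℚ) - (γv v ι : ℚ)) * (finrank ℂ (Wh v ι) : ℚ)) := by
    intro v
    congr 1
    have h0 : ((fun ι => (finrank ℂ (Wh v ι) : ℚ)) 0) = 0 := by simp only []; rw [hWh0 v]; simp
    calc ∑ j ∈ Finset.Icc 1 (sv v + 1),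
          (γv v j : ℚ) * ((finrank ℂ (Wh v j) : ℚ) - (finrank ℂ (Wh v (j - 1)) : ℚ))
        = (γv v (sv v + 1) : ℚ) * (finrank ℂ (Wh v (sv v + 1)) : ℚ)
          - ∑ ι ∈ Finset.Icc 1 (sv v),
              ((γv v (ι + 1) : ℚ) - (γv v ι : ℚ)) * (finrank ℂ (Wh v ι) : ℚ) :=
          abel2 (sv v) (fun ι => (finrank ℂ (Wh v ι) : ℚ)) (fun ι => (γv v ι : ℚ)) h0
      _ = _ := by rw [hdhtop v]
  -- final assembly
  rw [hL, Finset.sum_congr rfl (fun v _ => hR1 v), Finset.sum_congr rfl (fun v _ => hR2 v),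
    ← Finset.sum_sub_distrib, ← sub_eq_zero, ← Finset.sum_sub_distrib]
  have hterm : ∀ v ∈ (Finset.univ : Finset V),
      ((σ v : ℚ) * (∑ j ∈ Finset.Icc 1 s, ((γ (j + 1) : ℚ) - (γ j : ℚ))
              * (finrank ℂ (Submodule.map (kv v) (Wm v j)) : ℚ))
          - ((∑ v, σ v * tv v : ℕ) : ℚ) / ((∑ v, σ v * r v : ℕ) : ℚ)
            * ((σ v : ℚ) * (∑ j ∈ Finset.Icc 1 s, ((γ (j + 1) : ℚ) - (γ j : ℚ))
              * (finrank ℂ (Wm v j) : ℚ))))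
        - ((σ v : ℚ) * ((∑ ι ∈ Finset.Icc 1 (sv v), ((γv v (ι + 1) : ℚ) - (γv v ι : ℚ))
                * (finrank ℂ (Submodule.map (kv v) (Wh v ι)) : ℚ))
            - (tv v : ℚ) / (r v : ℚ) * ∑ ι ∈ Finset.Icc 1 (sv v),
                ((γv v (ι + 1) : ℚ) - (γv v ι : ℚ)) * (finrank ℂ (Wh v ι) : ℚ))
          - (σ v : ℚ) * ((tv v : ℚ) / (r v : ℚ)
              - ((∑ w, σ w * tv w : ℕ) : ℚ) / ((∑ w, σ w * r w : ℕ) : ℚ)) *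
            ((γv v (sv v + 1) : ℚ) * (r v : ℚ)
              - ∑ ι ∈ Finset.Icc 1 (sv v),
                  ((γv v (ι + 1) : ℚ) - (γv v ι : ℚ)) * (finrank ℂ (Wh v ι) : ℚ)))
      = (γ (s + 1) : ℚ) * ((σ v : ℚ) * (tv v : ℚ))
        - (γ (s + 1) : ℚ) * (((∑ v, σ v * tv v : ℕ) : ℚ) / ((∑ v, σ v * r v : ℕ) : ℚ)
            * ((σ v : ℚ) * (r v : ℚ))) := by
    intro v _
    rw [hSD v, hSd v]
    have hrv := hrq v
    field_simp [hrv, hRq]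
    ring
  rw [Finset.sum_congr rfl hterm, Finset.sum_sub_distrib, ← Finset.mul_sum, ← Finset.mul_sum,
    ← Finset.mul_sum]
  have hTT : ∑ v, (σ v : ℚ) * (tv v : ℚ) = ((∑ v, σ v * tv v : ℕ) : ℚ) := by push_cast; rfl
  have hRR : ∑ v, (σ v : ℚ) * (r v : ℚ) = ((∑ v, σ v * r v : ℕ) : ℚ) := by push_cast; rfl
  rw [hTT, hRR, div_mul_cancel₀ _ hRq]
  ring
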